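/- arXiv:cond-mat/0311149 — 6 statements merged into one kernel-verified Lean document; each statement's English description precedes it below -/
import Mathlib

section
/- The number of Dyck paths of length 2n with exactly p returns to the x-axis equals the Ballot number B_{n,p} = (p/n) * binomial(2n-p-1, n-1). -/
/-- Step weight: up-step = +1, down-step = -1. -/
def stepVal (b : Bool) : ℤ := if b then 1 else -1

/-- Height after the first `k` steps of the walk `l`. -/
def pathHeight (l : List Bool) (k : ℕ) : ℤ := ((l.take k).map stepVal).sum

/-- `l` is a Dyck path of length `2n`: from height 0 back to height 0, never below 0. -/
def IsDyckPath (n : ℕ) (l : List Bool) : Prop :=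
  l.length = 2 * n ∧ pathHeight l l.length = 0 ∧ ∀ k, 0 ≤ pathHeight l k

/-- Number of returns: down-steps ending on the x-axis. -/
def numReturns (l : List Bool) : ℕ :=
  (List.range l.length).countP
    (fun k => decide (l.getD k true = false ∧ pathHeight l (k + 1) = 0))

/-!
Count more generally the walks `ballotPaths u d p` with `u` up-steps and `d` down-steps that stay
weakly above the axis and return to it `p` times. Removing the last step gives a Pascal-type
recurrence: a final up-step does not change the number of returns, and a final down-step is a
return exactly when `u = d`. Induction against Pascal's rule then shows that, for `p + c ≤ v + 1`,
there are `C(v+c, v) - C(v+c, v+1)` such walks with `v + 1` up-steps and `p + c` down-steps, and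
for `u = d = n` this difference is `p/n · C(2n-p-1, n-1)`.
-/
lemma sum_map_stepVal (l : List Bool) :
    (l.map stepVal).sum = l.count true - l.count false := by
  induction l with
  | nil => simp
  | cons b l ih => cases b <;> simp [stepVal, ih] <;> ring

lemma pathHeight_eq (l : List Bool) (k : ℕ) :
    pathHeight l k = (l.take k).count true - (l.take k).count false :=
  sum_map_stepVal _

lemma pathHeight_of_length_le {l : List Bool} {k : ℕ} (hk : l.length ≤ k) :
    pathHeight l k = l.count true - l.count false := by
  rw [pathHeight_eq, List.take_of_length_le hk]

lemma count_false_le_count_true {l : List Bool} (h : ∀ k, 0 ≤ pathHeight l k) :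
    l.count false ≤ l.count true := by
  have := h l.length
  rw [pathHeight_of_length_le le_rfl] at this
  omega

lemma pathHeight_append_singleton {l : List Bool} {k : ℕ} (b : Bool) (hk : k ≤ l.length) :
    pathHeight (l ++ [b]) k = pathHeight l k := by
  simp [pathHeight, List.take_append, Nat.sub_eq_zero_of_le hk]

lemma nonneg_append_singleton_iff (l : List Bool) (b : Bool) :
    (∀ k, 0 ≤ pathHeight (l ++ [b]) k) ↔
      (∀ k, 0 ≤ pathHeight l k) ∧
        ((l ++ [b]).count false : ℤ) ≤ (l ++ [b]).count true := by
  constructor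
  · intro h
    refine ⟨fun k => ?_, ?_⟩
    · rcases le_or_gt k l.length with hk | hk
      · simpa only [pathHeight_append_singleton b hk] using h k
      · have := h l.length
        rwa [pathHeight_append_singleton b le_rfl, pathHeight_of_length_le le_rfl,
          ← pathHeight_of_length_le hk.le] at this
    · have := h (l ++ [b]).length
      rw [pathHeight_of_length_le le_rfl] at this
      linarith
  · rintro ⟨h, hlast⟩ k
    rcases le_or_gt k l.length with hk | hk
    · simpa only [pathHeight_append_singleton b hk] using h k
    · rw [pathHeight_of_length_le (by simpa using hk)]
      linarith

lemma numReturns_append_singleton (l : List Bool) (b : Bool) :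
    numReturns (l ++ [b]) = numReturns l +
      if b = false ∧ (l ++ [b]).count true = (l ++ [b]).count false then 1 else 0 := by
  have hlen : (l ++ [b]).length = l.length + 1 := by simp
  rw [numReturns, numReturns, hlen, List.range_succ, List.countP_append]
  congr 1
  · refine List.countP_congr fun k hk => ?_
    rw [List.mem_range] at hk
    rw [List.getD_append _ _ _ _ hk, pathHeight_append_singleton b hk]
  · have hlast : pathHeight (l ++ [b]) (l.length + 1) =
        (l ++ [b]).count true - (l ++ [b]).count false :=
      pathHeight_of_length_le hlen.le
    rw [List.countP_singleton, List.getD_append_right _ _ _ _ le_rfl, hlast]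
    simp only [Nat.sub_self, List.getD_cons_zero, sub_eq_zero, Nat.cast_inj, decide_eq_true_eq]

lemma numReturns_le_count_false (l : List Bool) : numReturns l ≤ l.count false := by
  induction l using List.reverseRecOn with
  | nil => simp [numReturns]
  | append_singleton l b ih =>
    rw [numReturns_append_singleton]
    cases b <;> simp only [List.count_append] <;> split <;> simp at * <;> omega

lemma Set.ncard_eq_ncard_append_true_add_ncard_append_false {S : Set (List Bool)} (hS : S.Finite)
    (hnil : [] ∉ S) :
    S.ncard = {l | l ++ [true] ∈ S}.ncard + {l | l ++ [false] ∈ S}.ncard := by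
  set T := (· ++ [true]) '' {l | l ++ [true] ∈ S}
  set F := (· ++ [false]) '' {l | l ++ [false] ∈ S}
  have hsplit : S = T ∪ F := by
    ext l
    refine ⟨fun hl => ?_, by rintro (⟨l, hl, rfl⟩ | ⟨l, hl, rfl⟩) <;> exact hl⟩
    obtain rfl | ⟨l, b, rfl⟩ := l.eq_nil_or_concat'
    · exact absurd hl hnil
    · cases b
      · exact Or.inr ⟨l, hl, rfl⟩
      · exact Or.inl ⟨l, hl, rfl⟩
  have hdisj : Disjoint T F := by
    rw [Set.disjoint_left]
    rintro _ ⟨x, -, rfl⟩ ⟨y, -, h⟩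
    simp at h
  have hT : T.Finite := hS.subset (hsplit ▸ Set.subset_union_left)
  have hF : F.Finite := hS.subset (hsplit ▸ Set.subset_union_right)
  calc S.ncard = (T ∪ F).ncard := congrArg _ hsplit
    _ = _ := by
      rw [Set.ncard_union_eq hdisj hT hF,
        Set.ncard_image_of_injective _ (List.append_left_injective _),
        Set.ncard_image_of_injective _ (List.append_left_injective _)]

def ballotPaths (u d p : ℕ) : Set (List Bool) :=
  {l | l.count true = u ∧ l.count false = d ∧ (∀ k, 0 ≤ pathHeight l k) ∧ numReturns l = p}

namespace ballotPaths

lemma finite (u d p : ℕ) : (ballotPaths u d p).Finite :=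
  (List.finite_length_eq Bool (u + d)).subset fun l ⟨hu, hd, _⟩ => by
    rw [Set.mem_ofPred_eq, ← List.count_true_add_count_false, hu, hd]

lemma eq_empty_of_up_lt_down {u d p : ℕ} (h : u < d) : ballotPaths u d p = ∅ := by
  refine Set.eq_empty_of_forall_notMem fun l ⟨hu, hd, hnn, _⟩ => ?_
  have := count_false_le_count_true hnn
  omega

lemma eq_empty_of_down_lt_returns {u d p : ℕ} (h : d < p) : ballotPaths u d p = ∅ :=
  Set.eq_empty_of_forall_notMem fun l ⟨_, hd, _, hp⟩ => by
    have := numReturns_le_count_false l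
    omega

lemma eq_singleton_replicate (u : ℕ) : ballotPaths u 0 0 = {List.replicate u true} := by
  ext l
  simp only [ballotPaths, Set.mem_ofPred_eq, Set.mem_singleton_iff]
  constructor
  · rintro ⟨hu, hd, -⟩
    rw [List.eq_replicate_iff, ← hu, ← List.count_true_add_count_false, hd]
    refine ⟨rfl, fun b hb => ?_⟩
    cases b
    · exact absurd (List.count_pos_iff.2 hb) (by omega)
    · rfl
  · rintro rfl
    have hd : (List.replicate u true).count false = 0 := by simp [List.count_replicate]
    refine ⟨by simp, hd, fun k => ?_, Nat.le_zero.1 (hd ▸ numReturns_le_count_false _)⟩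
    simp [pathHeight_eq, List.take_replicate, List.count_replicate]

lemma append_true_mem_iff {u d p : ℕ} {l : List Bool} :
    l ++ [true] ∈ ballotPaths (u + 1) d p ↔ l ∈ ballotPaths u d p := by
  simp only [ballotPaths, Set.mem_ofPred_eq, nonneg_append_singleton_iff,
    numReturns_append_singleton, List.count_append]
  constructor
  · rintro ⟨hu, hd, ⟨hnn, -⟩, hp⟩
    simp_all
  · rintro ⟨hu, hd, hnn, hp⟩
    have := count_false_le_count_true hnn
    simp_all
    omega

lemma append_false_mem_iff {u d p : ℕ} {l : List Bool} :
    l ++ [false] ∈ ballotPaths u (d + 1) p ↔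
      d < u ∧ l.count true = u ∧ l.count false = d ∧ (∀ k, 0 ≤ pathHeight l k) ∧
        numReturns l + (if u = d + 1 then 1 else 0) = p := by
  simp only [ballotPaths, Set.mem_ofPred_eq, nonneg_append_singleton_iff,
    numReturns_append_singleton, List.count_append]
  constructor
  · rintro ⟨hu, hd, ⟨hnn, hh⟩, hp⟩
    simp_all
  · rintro ⟨hdu, hu, hd, hnn, hp⟩
    simp_all

lemma ncard_succ_succ_eq (u d p : ℕ) :
    (ballotPaths (u + 1) (d + 1) p).ncard =
      (ballotPaths u (d + 1) p).ncard +
        {l | l ++ [false] ∈ ballotPaths (u + 1) (d + 1) p}.ncard := by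
  rw [Set.ncard_eq_ncard_append_true_add_ncard_append_false (finite _ _ _)
    (fun h => by simp [ballotPaths] at h)]
  simp only [append_true_mem_iff, Set.ofPred_mem_eq]

lemma ncard_succ_succ_of_lt {u d : ℕ} (p : ℕ) (h : d < u) :
    (ballotPaths (u + 1) (d + 1) p).ncard =
      (ballotPaths u (d + 1) p).ncard + (ballotPaths (u + 1) d p).ncard := by
  rw [ncard_succ_succ_eq]
  congr 2
  ext l
  rw [Set.mem_ofPred_eq, append_false_mem_iff, if_neg (by omega)]
  simp only [ballotPaths, Set.mem_ofPred_eq, add_zero, and_iff_right_iff_imp]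
  omega

lemma ncard_self_succ_succ (n p : ℕ) :
    (ballotPaths (n + 1) (n + 1) (p + 1)).ncard = (ballotPaths (n + 1) n p).ncard := by
  rw [ncard_succ_succ_eq, eq_empty_of_up_lt_down (Nat.lt_succ_self n), Set.ncard_empty, zero_add]
  congr 1
  ext l
  rw [Set.mem_ofPred_eq, append_false_mem_iff, if_pos rfl]
  simp [ballotPaths]

lemma ncard_self_succ_zero (n : ℕ) : (ballotPaths (n + 1) (n + 1) 0).ncard = 0 := by
  rw [ncard_succ_succ_eq, eq_empty_of_up_lt_down (Nat.lt_succ_self n), Set.ncard_empty, zero_add]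
  convert Set.ncard_empty (List Bool)
  ext l
  simp [append_false_mem_iff]

-- The ballot difference `C(v+c, v) - C(v+c, v+1)`, stated additively to avoid truncated
-- subtraction.
theorem ncard_add_choose {v p c : ℕ} (h : p + c ≤ v + 1) :
    (ballotPaths (v + 1) (p + c) p).ncard + (v + c).choose (v + 1) = (v + c).choose v := by
  induction hm : v + p + c using Nat.strong_induction_on generalizing v p c with
  | _ m ih =>
  subst hm
  obtain hpc | hpc | ⟨hpc, hlt⟩ : p + c = 0 ∨ p + c = v + 1 ∨ (0 < p + c ∧ p + c < v + 1) := by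
    omega
  · obtain ⟨rfl, rfl⟩ : p = 0 ∧ c = 0 := by omega
    simp [eq_singleton_replicate]
  · rcases p with _ | q
    · obtain rfl : c = v + 1 := by omega
      rw [zero_add, ncard_self_succ_zero, zero_add, Nat.choose_symm_add]
    · have hq := ih (v + q + c) (by omega) (p := q) (c := c) (by omega) rfl
      rw [show q + c = v by omega] at hq
      rwa [show q + 1 + c = v + 1 by omega, ncard_self_succ_succ]
  · obtain ⟨w, rfl⟩ : ∃ w, v = w + 1 := ⟨v - 1, by omega⟩
    rcases c with _ | c
    · obtain ⟨q, rfl⟩ : ∃ q, p = q + 1 := ⟨p - 1, by omega⟩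
      have hw := ih (w + (q + 1) + 0) (by omega) (p := q + 1) (c := 0) (by omega) rfl
      rw [add_zero, ncard_succ_succ_of_lt _ (by omega),
        eq_empty_of_down_lt_returns (Nat.lt_succ_self q), Set.ncard_empty, add_zero]
      simpa using hw
    · have hw : (ballotPaths (w + 1) (p + c + 1) p).ncard + (w + c + 1).choose (w + 1) =
          (w + c + 1).choose w :=
        ih (w + p + (c + 1)) (by omega) (p := p) (c := c + 1) (by omega) rfl
      have hc : (ballotPaths (w + 1 + 1) (p + c) p).ncard + (w + c + 1).choose (w + 1 + 1) =
          (w + c + 1).choose (w + 1) := by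
        simpa only [Nat.add_right_comm w 1 c] using
          ih (w + 1 + p + c) (by omega) (p := p) (c := c) (by omega) rfl
      have pascal₁ := Nat.choose_succ_succ' (w + c + 1) (w + 1)
      have pascal₂ := Nat.choose_succ_succ' (w + c + 1) w
      rw [show w + 1 + (c + 1) = w + c + 1 + 1 by omega, show p + (c + 1) = p + c + 1 from rfl,
        ncard_succ_succ_of_lt _ (by omega)]
      omega

lemma ncard_self_mul {n p : ℕ} (hpn : p ≤ n) :
    (ballotPaths n n p).ncard * n = p * (2 * n - p - 1).choose (n - 1) := by
  rcases n with _ | v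
  · simp only [mul_zero, Nat.le_zero.1 hpn, zero_mul]
  obtain ⟨c, hc⟩ : ∃ c, p + c = v + 1 := ⟨v + 1 - p, by omega⟩
  have hballot := ncard_add_choose (v := v) (p := p) (c := c) hc.le
  have hchoose := Nat.choose_succ_right_eq (v + c) v
  rw [hc] at hballot
  rw [Nat.add_sub_cancel_left] at hchoose
  rw [show 2 * (v + 1) - p - 1 = v + c by omega, Nat.add_sub_cancel, mul_comm p]
  refine Nat.add_right_cancel (m := (v + c).choose v * c) ?_
  rw [← hchoose, ← add_mul, hballot, hchoose, ← mul_add, hc]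

end ballotPaths

lemma isDyckPath_iff {n : ℕ} {l : List Bool} :
    IsDyckPath n l ↔ l.count true = n ∧ l.count false = n ∧ ∀ k, 0 ≤ pathHeight l k := by
  rw [IsDyckPath, pathHeight_of_length_le le_rfl, ← List.count_true_add_count_false, sub_eq_zero,
    Nat.cast_inj]
  constructor
  · rintro ⟨hlen, heq, hnn⟩
    exact ⟨by omega, by omega, hnn⟩
  · rintro ⟨ht, hf, hnn⟩
    exact ⟨by omega, by omega, hnn⟩

lemma setOf_isDyckPath_numReturns_eq (n p : ℕ) :
    {l | IsDyckPath n l ∧ numReturns l = p} = ballotPaths n n p := by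
  ext l
  simp only [Set.mem_ofPred_eq, isDyckPath_iff, ballotPaths, and_assoc]

/-- The number of Dyck paths of length 2n with exactly p returns equals the Ballot
number B_{n,p} = p (2n-p-1)! / (n! (n-p)!). -/
theorem dyck_paths_with_p_returns (n p : ℕ) (hp : 1 ≤ p) (hpn : p ≤ n) :
    Nat.card {l : List Bool // IsDyckPath n l ∧ numReturns l = p} *
      (n.factorial * (n - p).factorial) = p * (2 * n - p - 1).factorial := by
  have hcount : Nat.card {l : List Bool // IsDyckPath n l ∧ numReturns l = p} * n =
      p * (2 * n - p - 1).choose (n - 1) := by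
    have := ballotPaths.ncard_self_mul hpn
    rw [← setOf_isDyckPath_numReturns_eq] at this
    exact this
  obtain ⟨v, rfl⟩ : ∃ v, n = v + 1 := ⟨n - 1, by omega⟩
  obtain ⟨c, hc⟩ : ∃ c, v + 1 - p = c := ⟨_, rfl⟩
  have hfact : (v + c).choose v * v.factorial * c.factorial = (v + c).factorial := by
    rw [Nat.choose_symm_add]
    exact Nat.add_choose_mul_factorial_mul_factorial v c
  rw [show 2 * (v + 1) - p - 1 = v + c by omega, Nat.add_sub_cancel] at hcount
  rw [hc, show 2 * (v + 1) - p - 1 = v + c by omega, ← hfact, Nat.factorial_succ]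
  calc _ = Nat.card {l : List Bool // IsDyckPath (v + 1) l ∧ numReturns l = p} * (v + 1) *
        v.factorial * c.factorial := by ring
    _ = _ := by rw [hcount]; ring
end

section
/- The sum over p from 1 to n of the Ballot numbers B_{n,p} = (p/n) * binomial(2n-p-1, n-1) equals the Catalan number C_n = binomial(2n,n)/(n+1). -/
/-!
The ballot numbers telescope. Let `T p = C(2n-p, n) - C(2n-p, n+1)` (`ballotTail n p`), the
reflection-principle count of ballot paths. Pascal's rule gives
`T p - T (p+1) = C(2n-p-1, n-1) - C(2n-p-1, n)`, which is `(p/n) C(2n-p-1, n-1) = B_{n,p}`.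
Hence `∑ B_{n,p} = T 1 - T (n+1) = T 1`, and `T 1 = 2 C(2n-1, n) / (n+1) = C(2n, n) / (n+1)`.
-/

/-- Ballot number B_{n,p} = p (2n-p-1)! / (n! (n-p)!) as a rational. -/
noncomputable def ballot (n p : ℕ) : ℚ :=
  (p : ℚ) * (2 * n - p - 1).factorial / ((n.factorial : ℚ) * (n - p).factorial)

theorem Nat.cast_choose_sub_choose_succ {K : Type*} [Field K] [CharZero K] (N k : ℕ) :
    (N.choose k : K) - N.choose (k + 1) = N.choose k * (2 * k + 1 - N) / (k + 1) := by
  have hsucc : (N.choose (k + 1) : K) * (k + 1) = N.choose k * (N - k) := by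
    rcases le_or_gt k N with hkN | hNk
    · have h := congrArg (Nat.cast : ℕ → K) (Nat.choose_succ_right_eq N k)
      push_cast [Nat.cast_sub hkN] at h
      exact h
    · simp [Nat.choose_eq_zero_of_lt hNk, Nat.choose_eq_zero_of_lt (hNk.trans k.lt_succ_self)]
  rw [eq_div_iff (by exact_mod_cast k.succ_ne_zero)]
  linear_combination -hsucc

theorem ballot_eq_div_mul_choose {n p : ℕ} (hpn : p ≤ n) :
    ballot n p = p / n * (2 * n - p - 1).choose (n - 1) := by
  rcases Nat.eq_zero_or_pos p with rfl | hp
  · simp [ballot]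
  obtain ⟨a, rfl⟩ : ∃ a, n = a + 1 := ⟨n - 1, by omega⟩
  have hsum : 2 * (a + 1) - p - 1 = a + (a + 1 - p) := by omega
  rw [ballot, hsum, Nat.add_sub_cancel, Nat.cast_add_choose, Nat.factorial_succ]
  push_cast
  field_simp

noncomputable def ballotTail (n p : ℕ) : ℚ :=
  ((2 * n - p).choose n : ℚ) - (2 * n - p).choose (n + 1)

theorem ballot_eq_ballotTail_sub {n p : ℕ} (hpn : p ≤ n) :
    ballot n p = ballotTail n p - ballotTail n (p + 1) := by
  rcases n with _ | k
  · obtain rfl : p = 0 := by omega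
    simp [ballot, ballotTail]
  set m := 2 * (k + 1) - p - 1 with hm
  have hsucc : 2 * (k + 1) - p = m + 1 := by omega
  have hm_cast : (m : ℚ) = 2 * k + 1 - p := by
    rw [hm, Nat.cast_sub (by omega), Nat.cast_sub (by omega)]
    push_cast
    ring
  have hpascal : ballotTail (k + 1) p - ballotTail (k + 1) (p + 1) =
      m.choose k - m.choose (k + 1) := by
    rw [ballotTail, ballotTail, hsucc, show 2 * (k + 1) - (p + 1) = m by omega,
      Nat.choose_succ_succ', Nat.choose_succ_succ']
    push_cast
    ring
  rw [hpascal, Nat.cast_choose_sub_choose_succ, hm_cast, ballot_eq_div_mul_choose hpn,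
    Nat.add_sub_cancel]
  push_cast
  ring

theorem ballotTail_one {n : ℕ} (hn : 1 ≤ n) : ballotTail n 1 = (2 * n).choose n / (n + 1) := by
  obtain ⟨m, rfl⟩ : ∃ m, n = m + 1 := ⟨n - 1, by omega⟩
  have hcentral : (2 * (m + 1)).choose (m + 1) = 2 * (2 * m + 1).choose (m + 1) := by
    rw [show 2 * (m + 1) = 2 * m + 1 + 1 by ring, Nat.choose_succ_succ', ← Nat.choose_symm_half]
    ring
  rw [ballotTail, show 2 * (m + 1) - 1 = 2 * m + 1 by omega, Nat.cast_choose_sub_choose_succ,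
    hcentral]
  push_cast
  field_simp
  ring

theorem ballotTail_succ_self {n : ℕ} (hn : 1 ≤ n) : ballotTail n (n + 1) = 0 := by
  rw [ballotTail, Nat.choose_eq_zero_of_lt (by omega), Nat.choose_eq_zero_of_lt (by omega)]
  simp

/-- The sum over p from 1 to n of the Ballot numbers equals the Catalan number
C_n = binomial(2n,n)/(n+1). -/
theorem sum_ballot_eq_catalan (n : ℕ) (hn : 1 ≤ n) :
    ∑ p ∈ Finset.Icc 1 n, ballot n p = (Nat.choose (2 * n) n : ℚ) / (n + 1) := by
  have htelescope : ∑ p ∈ Finset.Icc 1 n, ballot n p =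
      -∑ p ∈ Finset.Icc 1 n, (ballotTail n (p + 1) - ballotTail n p) := by
    rw [← Finset.sum_neg_distrib]
    refine Finset.sum_congr rfl fun p hp => ?_
    rw [ballot_eq_ballotTail_sub (Finset.mem_Icc.mp hp).2, neg_sub]
  rw [htelescope, Finset.sum_Icc_sub hn, ballotTail_succ_self hn, ballotTail_one hn]
  ring
end

section
/- Let H be a real n×n matrix whose columns each sum to zero. Then the vector v with components v_b = X(b,b) = det H(b,b) (the principal cofactors) satisfies H v = 0. -/
/-!
The rows of `H` sum to zero, so `det H = 0` and hence `H * adj H = 0`, i.e.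
`∑_b H a b * adj H b a = 0` for every `a`. Each row of `adj H` is constant: `adj H b a` is the
determinant of `H` with row `a` replaced by `e_b`, and row `a` of `H` is minus the sum of the other
rows of that matrix, so a row operation followed by swapping rows `a` and `a'` shows that this
determinant does not depend on `a`. Thus `adj H b a = adj H b b = det H(b,b)`.
-/

open Matrix

namespace Matrix

variable {n R : Type*} [Fintype n] [DecidableEq n] [CommRing R] {A : Matrix n n R}

theorem det_eq_zero_of_sum_col_eq_zero [Nonempty n] (hA : ∀ j, ∑ i, A i j = 0) : A.det = 0 := by
  obtain ⟨j⟩ := ‹Nonempty n›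
  have hrows : ∑ k, (1 : n → R) k • A k = 0 := funext fun l => by
    rw [Finset.sum_apply]
    simp [hA]
  have h := det_updateRow_sum A j 1
  rw [hrows, Pi.one_apply, one_smul] at h
  rw [← h]
  exact det_eq_zero_of_row_eq_zero j fun _ => by simp

theorem sum_erase_updateRow_apply_of_sum_col_eq_zero (hA : ∀ j, ∑ i, A i j = 0) (v : n → R)
    (i l : n) : ∑ k ∈ Finset.univ.erase i, A.updateRow i v k l = -A i l := by
  rw [Finset.sum_congr rfl fun k hk => by rw [updateRow_ne (Finset.ne_of_mem_erase hk)],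
    Finset.sum_erase_eq_sub (Finset.mem_univ i), hA, zero_sub]

theorem det_updateRow_eq_of_sum_col_eq_zero (hA : ∀ j, ∑ i, A i j = 0) (v : n → R) (i j : n) :
    (A.updateRow i v).det = (A.updateRow j v).det := by
  rcases eq_or_ne i j with rfl | hij
  · rfl
  set M := A.updateRow i v
  have hAi : ∑ k, (if k = i then 0 else -1 : R) • M k = A i := by
    funext l
    rw [Finset.sum_apply, ← Finset.add_sum_erase _ _ (Finset.mem_univ i),
      Finset.sum_congr rfl fun k hk => by rw [if_neg (Finset.ne_of_mem_erase hk)]]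
    simp [Finset.sum_neg_distrib, M, sum_erase_updateRow_apply_of_sum_col_eq_zero hA]
  have hswap : M.updateRow j (A i) = (A.updateRow j v).submatrix (Equiv.swap i j) id := by
    ext k l
    rcases eq_or_ne k i with rfl | hki
    · simp [M, hij]
    rcases eq_or_ne k j with rfl | hkj
    · simp [M, hij]
    · simp [M, hki, hkj, Equiv.swap_apply_of_ne_of_ne hki hkj]
  have h := det_updateRow_sum M j fun k => if k = i then 0 else -1
  rw [hAi, hswap, det_permute, Equiv.Perm.sign_swap hij, if_neg hij.symm] at h
  simpa using h.symm

theorem adjugate_apply_eq_of_sum_col_eq_zero (hA : ∀ j, ∑ i, A i j = 0) (i j k : n) :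
    A.adjugate i j = A.adjugate i k := by
  rw [adjugate_apply, adjugate_apply, det_updateRow_eq_of_sum_col_eq_zero hA]

theorem mulVec_diag_adjugate_eq_zero_of_sum_col_eq_zero (hA : ∀ j, ∑ i, A i j = 0) :
    A *ᵥ A.adjugate.diag = 0 := by
  funext i
  have : Nonempty n := ⟨i⟩
  calc (A *ᵥ A.adjugate.diag) i = ∑ k, A i k * A.adjugate k i :=
        Finset.sum_congr rfl fun k _ => by
          rw [diag_apply, adjugate_apply_eq_of_sum_col_eq_zero hA k k i]
    _ = (A * A.adjugate) i i := mul_apply.symm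
    _ = 0 := by simp [mul_adjugate, det_eq_zero_of_sum_col_eq_zero hA]

theorem adjugate_fin_succ_apply_self {m : ℕ} (B : Matrix (Fin (m + 1)) (Fin (m + 1)) R)
    (i : Fin (m + 1)) : B.adjugate i i = (B.submatrix i.succAbove i.succAbove).det := by
  rw [adjugate_fin_succ_eq_det_submatrix, ← two_mul, pow_mul, neg_one_sq, one_pow, one_mul]

end Matrix

/-- For a square real matrix whose columns sum to zero, the vector of principal
cofactors v_b = det H(b,b) is a right null vector: H v = 0. -/
theorem principal_cofactors_null_vector (n : ℕ)
    (H : Matrix (Fin (n + 1)) (Fin (n + 1)) ℝ) (hcol : ∀ b, ∑ a, H a b = 0) :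
    H.mulVec (fun b => (H.submatrix b.succAbove b.succAbove).det) = 0 := by
  simp_rw [← adjugate_fin_succ_apply_self]
  exact mulVec_diag_adjugate_eq_zero_of_sum_col_eq_zero hcol
end

section
/- Let H be the generator of a Markov chain, i.e. H_{ab} = -r_{ab} for a ≠ b with r_{ab} ≥ 0 and columns summing to zero. Then each principal cofactor X(b,b) = det H(b,b) is a polynomial in the rates r_{ac} with coefficients in {0,1}; in particular X(b,b) ≥ 0. -/
/-!
The column of `H` indexed by `c` is `∑_{a ≠ c} r_{ac} (e_c - e_a)`. Expanding the principal
minor by multilinearity in these columns writes it as a sum, over all choices of one rate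
`r_{a(c) c}` per remaining column `c`, of pairwise distinct monomials `∏_c r_{a(c) c}`, each with
coefficient `det (1 - N)`, where `N` is the 0/1 matrix of the partial map `c ↦ a(c)` (undefined
when `a(c) = b`). Such a determinant is `0` or `1`: if the partial map has a cycle, the rows
`e_c - e_{a(c)}` of `1 - N` along it sum to zero; otherwise `N` is nilpotent and `det (1 - N) = 1`.
-/

open Finset

namespace Matrix

variable {ι : Type*} [DecidableEq ι]

def ofPartialFun {R : Type*} [Zero R] [One R] (g : ι → Option ι) : Matrix ι ι R :=
  of fun i j => if g i = some j then 1 else 0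

theorem map_ofPartialFun {R S : Type*} [NonAssocSemiring R] [NonAssocSemiring S] (f : R →+* S)
    (g : ι → Option ι) : (ofPartialFun g : Matrix ι ι R).map f = ofPartialFun g := by
  ext i j
  simp [ofPartialFun]

variable [Fintype ι]

theorem ofPartialFun_pow_apply {R : Type*} [Semiring R] (g : ι → Option ι) (k : ℕ) (i j : ι) :
    (ofPartialFun g ^ k : Matrix ι ι R) i j =
      if (·.bind g)^[k] (some i) = some j then 1 else 0 := by
  induction k generalizing j with
  | zero => simp [one_apply]
  | succ k ih =>
    rw [pow_succ, mul_apply, Function.iterate_succ_apply']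
    simp_rw [ih]
    generalize (·.bind g)^[k] (some i) = o
    cases o with
    | none => simp
    | some l => simp only [Option.some.injEq, ite_mul, one_mul, zero_mul, sum_ite_eq, mem_univ,
        if_true, Option.bind_some, ofPartialFun, of_apply]

theorem isNilpotent_ofPartialFun {R : Type*} [Semiring R] {g : ι → Option ι}
    (h : ∀ i, ∃ k, (·.bind g)^[k] (some i) = none) :
    IsNilpotent (ofPartialFun g : Matrix ι ι R) := by
  choose k hk using h
  refine ⟨univ.sup k, ?_⟩
  ext i j
  rw [ofPartialFun_pow_apply, ← Nat.sub_add_cancel (le_sup (mem_univ i) : k i ≤ univ.sup k),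
    Function.iterate_add_apply, hk i, Function.iterate_fixed rfl]
  simp

theorem det_one_sub_of_isNilpotent {R : Type*} [CommRing R] [IsDomain R] {M : Matrix ι ι R}
    (hM : IsNilpotent M) : (1 - M).det = 1 := by
  have hcharpoly := sub_eq_zero.mp (isNilpotent_charpoly_sub_pow_of_isNilpotent hM).eq_zero
  simpa [hcharpoly] using (M.eval_charpoly 1).symm

theorem det_one_sub_ofPartialFun_eq_zero_of_cycle {g : ι → Option ι} {y : ℕ → ι} {k : ℕ}
    (hk : 0 < k) (hy : ∀ l, g (y l) = some (y (l + 1))) (hyk : y k = y 0) :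
    (1 - ofPartialFun g : Matrix ι ι ℤ).det = 0 := by
  rw [← exists_vecMul_eq_zero_iff]
  refine ⟨∑ l ∈ range k, Pi.single (y l) 1, fun h => ?_, ?_⟩
  · have hy0 := congrFun h (y 0)
    simp only [Finset.sum_apply, Pi.single_apply, sum_boole, Pi.zero_apply, Int.natCast_eq_zero,
      card_eq_zero, filter_eq_empty_iff, mem_range] at hy0
    exact hy0 hk rfl
  · have hrow : ∀ l, Pi.single (y l) 1 ᵥ* (1 - ofPartialFun g : Matrix ι ι ℤ) =
        Pi.single (y l) 1 - Pi.single (y (l + 1)) 1 := by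
      intro l
      ext j
      simp [vecMul_sub, ofPartialFun, hy, Pi.single_apply, eq_comm]
    rw [sum_vecMul]
    simp_rw [hrow]
    rw [sum_range_sub', hyk, sub_self]

theorem det_one_sub_ofPartialFun_eq_zero_or_one (g : ι → Option ι) :
    (1 - ofPartialFun g : Matrix ι ι ℤ).det = 0 ∨ (1 - ofPartialFun g : Matrix ι ι ℤ).det = 1 := by
  by_cases hnil : ∀ i, ∃ k, (·.bind g)^[k] (some i) = none
  · exact .inr (det_one_sub_of_isNilpotent (isNilpotent_ofPartialFun hnil))
  push Not at hnil
  obtain ⟨i, hi⟩ := hnil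
  choose y hy using fun l => Option.ne_none_iff_exists'.mp (hi l)
  have hcycle : ∀ a b, a < b → y a = y b → (1 - ofPartialFun g : Matrix ι ι ℤ).det = 0 := by
    intro a b hab hyab
    refine det_one_sub_ofPartialFun_eq_zero_of_cycle (y := fun l => y (a + l)) (k := b - a)
      (by omega) (fun l => ?_) (by simpa [Nat.add_sub_cancel' hab.le] using hyab.symm)
    have hstep := hy (a + l + 1)
    rwa [Function.iterate_succ_apply', hy, Option.bind_some] at hstep
  obtain ⟨a, b, hne, hyab⟩ := Finite.exists_ne_map_eq_of_infinite y
  rcases hne.lt_or_gt with hlt | hlt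
  · exact .inl (hcycle a b hlt hyab)
  · exact .inl (hcycle b a hlt hyab.symm)

theorem det_eq_sum_piFinset_prod_smul {R α : Type*} [CommRing R] {A : Matrix ι ι R}
    (s : ι → Finset α) (x : ι → α → R) (w : ι → α → ι → R)
    (hA : ∀ i, A i = ∑ a ∈ s i, x i a • w i a) :
    A.det = ∑ c ∈ Fintype.piFinset s, (∏ i, x i (c i)) • (of fun i => w i (c i)).det := by
  obtain rfl : A = fun i => ∑ a ∈ s i, x i a • w i a := funext hA
  change detRowAlternating.toMultilinearMap _ = _
  rw [MultilinearMap.map_sum_finset]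
  refine sum_congr rfl fun c _ => ?_
  rw [MultilinearMap.map_smul_univ]
  rfl

end Matrix

namespace MvPolynomial

theorem coeff_sum_monomial_mem {σ R ι : Type*} [CommSemiring R] {s : Finset ι}
    {d : ι → σ →₀ ℕ} (hd : Set.InjOn d s) {a : ι → R} {T : Set R} (h0 : 0 ∈ T)
    (ha : ∀ c ∈ s, a c ∈ T) (m : σ →₀ ℕ) : coeff m (∑ c ∈ s, monomial (d c) (a c)) ∈ T := by
  classical
  simp only [coeff_sum, coeff_monomial]
  by_cases hm : ∃ c ∈ s, d c = m
  · obtain ⟨c, hc, rfl⟩ := hm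
    rw [sum_eq_single_of_mem c hc fun c' hc' hne => if_neg fun h => hne (hd hc' hc h), if_pos rfl]
    exact ha c hc
  · rw [sum_eq_zero fun c hc => if_neg fun h => hm ⟨c, hc, h⟩]
    exact h0

theorem aeval_nonneg_of_coeff_nonneg {σ S : Type*} [CommRing S] [PartialOrder S]
    [IsOrderedRing S] {p : MvPolynomial σ ℤ} (hp : ∀ m, 0 ≤ p.coeff m) {v : σ → S}
    (hv : ∀ i, 0 ≤ v i) : 0 ≤ aeval v p := by
  rw [aeval_def, eval₂_eq]
  exact sum_nonneg fun d _ =>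
    mul_nonneg (Int.cast_nonneg (hp d)) (prod_nonneg fun i _ => pow_nonneg (hv i) _)

end MvPolynomial

open MvPolynomial Matrix

theorem Finsupp.sum_single_mk_injective {κ ι : Type*} [Fintype κ] [DecidableEq ι] {σ : κ → ι}
    (hσ : σ.Injective) : (fun c : κ → ι => ∑ i, Finsupp.single (c i, σ i) 1).Injective := by
  intro c₁ c₂ h
  have hcoeff : ∀ (c : κ → ι) i, (∑ i', Finsupp.single (c i', σ i') 1) (c₁ i, σ i) =
      if c i = c₁ i then 1 else 0 := by
    intro c i
    rw [Finsupp.finsetSum_apply, Finset.sum_eq_single i (fun i' _ hi' => ?_) (by simp)]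
    · simp [Finsupp.single_apply]
    · simp [hσ.ne hi']
  funext i
  simpa [hcoeff, eq_comm] using DFunLike.congr_fun h (c₁ i, σ i)

variable {ι κ R : Type*} [Fintype ι] [DecidableEq ι] [DecidableEq κ] [CommRing R]

variable (ι R) in
noncomputable def markovGenerator : Matrix ι ι (MvPolynomial (ι × ι) R) :=
  fun a c => if a = c then ∑ a' ∈ univ.erase c, X (a', c) else -X (a, c)

theorem markovGenerator_submatrix_transpose_row {σ : κ → ι} (hσ : σ.Injective) (i : κ) :
    ((markovGenerator ι R).submatrix σ σ)ᵀ i =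
      ∑ a ∈ univ.erase (σ i), (X (a, σ i) : MvPolynomial (ι × ι) R) •
        (Pi.single i 1 - fun j => if σ j = a then (1 : MvPolynomial (ι × ι) R) else 0) := by
  funext j
  by_cases hji : j = i
  · subst hji
    simp only [transpose_apply, submatrix_apply, markovGenerator, if_pos, Finset.sum_apply]
    refine sum_congr rfl fun a ha => ?_
    simp [(ne_of_mem_erase ha).symm]
  · simp [markovGenerator, hσ.ne hji, hji]

theorem det_submatrix_markovGenerator [Fintype κ] {σ : κ → ι} (hσ : σ.Injective) :
    ((markovGenerator ι R).submatrix σ σ).det =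
      ∑ c ∈ Fintype.piFinset fun i => univ.erase (σ i),
        monomial (∑ i, Finsupp.single (c i, σ i) 1)
          ((1 - ofPartialFun (Function.partialInv σ ∘ c) : Matrix κ κ ℤ).det : R) := by
  rw [← det_transpose,
    det_eq_sum_piFinset_prod_smul _ _ _ (markovGenerator_submatrix_transpose_row hσ)]
  refine sum_congr rfl fun c _ => ?_
  have hrows : (of fun i => Pi.single i 1 -
        fun j => if σ j = c i then (1 : MvPolynomial (ι × ι) R) else 0) =
      (1 - ofPartialFun (Function.partialInv σ ∘ c) : Matrix κ κ ℤ).map (Int.castRingHom _) := by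
    refine Matrix.ext fun i j => ?_
    simp [ofPartialFun, hσ.isPartialInv j (c i), Pi.single_apply, one_apply, eq_comm]
  have hmonomial : ∏ i, (X (c i, σ i) : MvPolynomial (ι × ι) R) =
      monomial (∑ i, Finsupp.single (c i, σ i) 1) 1 := by
    rw [monomial_sum_one]; rfl
  rw [hrows, ← RingHom.mapMatrix_apply, ← RingHom.map_det, eq_intCast,
    ← map_intCast (C : R →+* MvPolynomial (ι × ι) R), smul_eq_mul, hmonomial, mul_comm,
    C_mul_monomial, mul_one]

theorem coeff_det_submatrix_markovGenerator [Fintype κ] {σ : κ → ι} (hσ : σ.Injective)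
    (m : ι × ι →₀ ℕ) :
    coeff m ((markovGenerator ι R).submatrix σ σ).det = 0 ∨
      coeff m ((markovGenerator ι R).submatrix σ σ).det = 1 := by
  rw [det_submatrix_markovGenerator hσ]
  refine coeff_sum_monomial_mem (T := {0, 1}) (Finsupp.sum_single_mk_injective hσ).injOn
    (by simp) (fun c _ => ?_) m
  rcases det_one_sub_ofPartialFun_eq_zero_or_one (Function.partialInv σ ∘ c) with h | h <;>
    simp [h]

/-- For a Markov generator H with off-diagonal entries -r_{ab} and columns summing to
zero, each principal cofactor det H(b,b), viewed as a polynomial in the rates, has all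
coefficients in {0,1}; in particular its value is nonnegative for nonnegative rates. -/
theorem principal_cofactor_polynomial_coeffs (n : ℕ) (b : Fin (n + 1)) :
    let r : Fin (n + 1) → Fin (n + 1) → MvPolynomial (Fin (n + 1) × Fin (n + 1)) ℤ :=
      fun a c => MvPolynomial.X (a, c)
    let H : Matrix (Fin (n + 1)) (Fin (n + 1)) (MvPolynomial (Fin (n + 1) × Fin (n + 1)) ℤ) :=
      fun a c => if a = c then ∑ a' ∈ Finset.univ.erase c, r a' c else - r a c
    (∀ m, (H.submatrix b.succAbove b.succAbove).det.coeff m = 0 ∨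
          (H.submatrix b.succAbove b.succAbove).det.coeff m = 1) ∧
    (∀ v : Fin (n + 1) × Fin (n + 1) → ℝ, (∀ p, 0 ≤ v p) →
      0 ≤ MvPolynomial.aeval v (H.submatrix b.succAbove b.succAbove).det) := by
  intro r H
  have hcoeff : ∀ m, (H.submatrix b.succAbove b.succAbove).det.coeff m = 0 ∨
      (H.submatrix b.succAbove b.succAbove).det.coeff m = 1 :=
    coeff_det_submatrix_markovGenerator Fin.succAbove_right_injective
  refine ⟨hcoeff, fun v hv => aeval_nonneg_of_coeff_nonneg (fun m => ?_) hv⟩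
  rcases hcoeff m with h | h <;> simp [h]
end

section
/- The partition function of the one-transit walk model satisfies the convolution identity Z_n(z₁,z₂) = (z₁z₂)^n ∑_{p=0}^n Z̃_p(z₁) Z̃_{n-p}(z₂), where Z̃_m(z) = ∑_{q=0}^m B_{m,q} z^{-q} is the one-sided contact generating function. -/
/-- Ballot number B_{m,q}, with B_{0,0} = 1 and B_{m,q} = 0 for q > m. -/
noncomputable def Bq (m q : ℕ) : ℝ :=
  if m = 0 then (if q = 0 then 1 else 0)
  else if q ≤ m then
    (q : ℝ) * (2 * m - q - 1).factorial / ((m.factorial : ℝ) * (m - q).factorial)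
  else 0

/-- One-sided contact generating function Z̃_m(z) = ∑_q B_{m,q} z^{-q}. -/
noncomputable def Zt (m : ℕ) (z : ℝ) : ℝ := ∑ q ∈ Finset.range (m + 1), Bq m q * z⁻¹ ^ q

/-! The column generating functions `b_q = ∑ₘ B_{m,q} tᵐ` of the ballot numbers are the powers
`(t C(t))^q`, `C` the Catalan series: the recurrence `B_{m+1,q+1} = B_{m+1,q+2} + B_{m,q}`
gives `b_{q+2} = b_{q+1} - t b_q`, and `b₁ = t C` satisfies `b₁² = b₁ - t` by `C = 1 + t C²`.
Hence the columns convolve, `∑ₖ B_{k,q} B_{n-k,q'} = B_{n,q+q'}`, and both sides of the identity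
are `∑_{q,q'} B_{n,q+q'} z₁^{-q} z₂^{-q'}`. -/

open Finset PowerSeries

lemma Bq_eq_zero_of_lt {m q : ℕ} (h : m < q) : Bq m q = 0 := by
  unfold Bq
  split_ifs <;> first | rfl | omega

lemma Bq_zero_right (m : ℕ) : Bq m 0 = if m = 0 then 1 else 0 := by
  unfold Bq
  split_ifs <;> simp_all

lemma Bq_self (m : ℕ) : Bq m m = 1 := by
  rcases m with _ | m
  · simp [Bq]
  · simp only [Bq, add_eq_zero, one_ne_zero, and_false, if_false, le_refl, if_true,
      Nat.sub_self, Nat.factorial_zero, Nat.cast_one, mul_one,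
      show 2 * (m + 1) - (m + 1) - 1 = m by omega, Nat.factorial_succ m]
    push_cast
    field_simp

lemma Bq_succ_one (m : ℕ) : Bq (m + 1) 1 = catalan m := by
  have h : ((m + 1 : ℕ) : ℝ) * catalan m = (2 * m).factorial / (m.factorial * m.factorial) := by
    rw [← Nat.cast_mul, succ_mul_catalan_eq_centralBinom, Nat.centralBinom,
      Nat.cast_choose ℝ (by omega : m ≤ 2 * m), show 2 * m - m = m by omega]
  simp only [Bq, add_eq_zero, one_ne_zero, and_false, if_false,
    show 1 ≤ m + 1 by omega, if_true, show 2 * (m + 1) - 1 - 1 = 2 * m by omega,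
    Nat.add_sub_cancel, Nat.factorial_succ m] at h ⊢
  push_cast at h ⊢
  field_simp at h ⊢
  linarith

lemma Bq_succ_succ (m q : ℕ) : Bq (m + 1) (q + 1) = Bq (m + 1) (q + 2) + Bq m q := by
  rcases lt_trichotomy q m with h | rfl | h
  · obtain ⟨k, rfl⟩ := Nat.exists_eq_add_of_lt h
    simp only [Bq, add_eq_zero, one_ne_zero, and_false, if_false,
      show q + 1 ≤ q + k + 1 + 1 by omega, show q + 2 ≤ q + k + 1 + 1 by omega,
      show q ≤ q + k + 1 by omega, show q + k + 1 ≠ 0 by omega, if_true,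
      show 2 * (q + k + 1 + 1) - (q + 1) - 1 = (q + 2 * k + 1) + 1 by omega,
      show 2 * (q + k + 1 + 1) - (q + 2) - 1 = q + 2 * k + 1 by omega,
      show 2 * (q + k + 1) - q - 1 = q + 2 * k + 1 by omega,
      show q + k + 1 + 1 - (q + 1) = k + 1 by omega,
      show q + k + 1 + 1 - (q + 2) = k by omega,
      show q + k + 1 - q = k + 1 by omega,
      Nat.factorial_succ (q + 2 * k + 1), Nat.factorial_succ (q + k + 1), Nat.factorial_succ k]
    push_cast
    field_simp
    ring
  · rw [Bq_self, Bq_self, Bq_eq_zero_of_lt (by omega), zero_add]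
  · rw [Bq_eq_zero_of_lt h, Bq_eq_zero_of_lt (by omega), Bq_eq_zero_of_lt (by omega), add_zero]

noncomputable def ballotSeries (q : ℕ) : ℝ⟦X⟧ := PowerSeries.mk fun m => Bq m q

@[simp]
lemma coeff_ballotSeries (m q : ℕ) : coeff m (ballotSeries q) = Bq m q := coeff_mk _ _

lemma ballotSeries_zero : ballotSeries 0 = 1 := by
  ext m
  simp [Bq_zero_right, coeff_one]

lemma ballotSeries_one : ballotSeries 1 = X * map (Nat.castRingHom ℝ) catalanSeries := by
  ext (_ | m)
  · simp [Bq]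
  · simp [coeff_succ_X_mul, Bq_succ_one]

lemma ballotSeries_succ_succ (q : ℕ) :
    ballotSeries (q + 1) = ballotSeries (q + 2) + X * ballotSeries q := by
  ext (_ | m)
  · rw [map_add, coeff_zero_X_mul, coeff_ballotSeries, coeff_ballotSeries,
      Bq_eq_zero_of_lt (by omega), Bq_eq_zero_of_lt (by omega), add_zero]
  · rw [map_add, coeff_succ_X_mul, coeff_ballotSeries, coeff_ballotSeries, coeff_ballotSeries,
      Bq_succ_succ]

lemma ballotSeries_one_sq : ballotSeries 1 ^ 2 = ballotSeries 1 - X := by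
  have h := congrArg (map (Nat.castRingHom ℝ)) catalanSeries_sq_mul_X_add_one
  rw [map_add, map_mul, map_pow, map_X, map_one] at h
  rw [ballotSeries_one]
  linear_combination X * h

lemma ballotSeries_eq_ballotSeries_one_pow (q : ℕ) : ballotSeries q = ballotSeries 1 ^ q := by
  induction q using Nat.twoStepInduction with
  | zero => rw [ballotSeries_zero, pow_zero]
  | one => rw [pow_one]
  | more q ih₀ ih₁ =>
    rw [eq_sub_of_add_eq (ballotSeries_succ_succ q).symm, ih₀, ih₁, pow_succ, pow_add,
      ballotSeries_one_sq]
    ring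

theorem sum_range_Bq_mul_Bq (n q q' : ℕ) :
    ∑ p ∈ range (n + 1), Bq p q * Bq (n - p) q' = Bq n (q + q') := by
  have h := congrArg (coeff n) (ballotSeries_eq_ballotSeries_one_pow (q + q'))
  rw [pow_add, ← ballotSeries_eq_ballotSeries_one_pow, ← ballotSeries_eq_ballotSeries_one_pow,
    coeff_mul, Nat.sum_antidiagonal_eq_sum_range_succ
      (fun i j => coeff i (ballotSeries q) * coeff j (ballotSeries q'))] at h
  simpa using h.symm

lemma sum_range_Bq_mul_eq_of_le (f : ℕ → ℝ) {m N : ℕ} (h : m ≤ N) :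
    ∑ q ∈ range (m + 1), Bq m q * f q = ∑ q ∈ range (N + 1), Bq m q * f q :=
  (eventually_constant_sum (fun _ hk => by rw [Bq_eq_zero_of_lt hk, zero_mul]) (by omega)).symm

lemma sum_Bq_mul_sum_pow_mul_pow (n : ℕ) (x y : ℝ) :
    ∑ p ∈ range (n + 1), Bq n p * ∑ q ∈ range (p + 1), x ^ q * y ^ (p - q) =
      ∑ q ∈ range (n + 1), ∑ q' ∈ range (n + 1), Bq n (q + q') * (x ^ q * y ^ q') :=
  calc _ = ∑ p ∈ range (n + 1), ∑ q ∈ range (p + 1),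
          Bq n (q + (p - q)) * (x ^ q * y ^ (p - q)) := by
        refine sum_congr rfl fun p _ => ?_
        rw [mul_sum]
        refine sum_congr rfl fun q hq => ?_
        rw [Nat.add_sub_of_le (Nat.lt_succ_iff.mp (mem_range.mp hq))]
    _ = ∑ q ∈ range (n + 1), ∑ q' ∈ range (n + 1 - q), Bq n (q + q') * (x ^ q * y ^ q') :=
        sum_range_diag_flip _ fun q q' => Bq n (q + q') * (x ^ q * y ^ q')
    _ = _ := sum_congr rfl fun q _ => (eventually_constant_sum
        (fun _ hk => by rw [Bq_eq_zero_of_lt (by omega), zero_mul]) (by omega)).symm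

lemma sum_mul_sum_Bq_mul_pow (n : ℕ) (x y : ℝ) :
    ∑ p ∈ range (n + 1), (∑ q ∈ range (p + 1), Bq p q * x ^ q) *
        ∑ q' ∈ range (n - p + 1), Bq (n - p) q' * y ^ q' =
      ∑ q ∈ range (n + 1), ∑ q' ∈ range (n + 1), Bq n (q + q') * (x ^ q * y ^ q') :=
  calc _ = ∑ p ∈ range (n + 1), (∑ q ∈ range (n + 1), Bq p q * x ^ q) *
          ∑ q' ∈ range (n + 1), Bq (n - p) q' * y ^ q' := by
        refine sum_congr rfl fun p hp => ?_
        have hpn := Nat.lt_succ_iff.mp (mem_range.mp hp)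
        rw [sum_range_Bq_mul_eq_of_le _ hpn, sum_range_Bq_mul_eq_of_le _ (n.sub_le p)]
    _ = ∑ q ∈ range (n + 1), ∑ q' ∈ range (n + 1),
          (∑ p ∈ range (n + 1), Bq p q * Bq (n - p) q') * (x ^ q * y ^ q') := by
        simp_rw [sum_mul_sum, sum_mul]
        rw [sum_comm]
        refine sum_congr rfl fun q _ => ?_
        rw [sum_comm]
        exact sum_congr rfl fun q' _ => sum_congr rfl fun p _ => by ring
    _ = _ := by simp_rw [sum_range_Bq_mul_Bq]

theorem one_transit_convolution_general (n : ℕ) (z₁ z₂ : ℝ) :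
    ∑ p ∈ Finset.range (n + 1), Bq n p *
        ∑ q ∈ Finset.range (p + 1), z₁⁻¹ ^ q * z₂⁻¹ ^ (p - q) =
      ∑ p ∈ Finset.range (n + 1), Zt p z₁ * Zt (n - p) z₂ :=
  (sum_Bq_mul_sum_pow_mul_pow n _ _).trans (sum_mul_sum_Bq_mul_pow n _ _).symm

/-- The one-transit partition function factorizes as a convolution of the two
one-sided contact generating functions. -/
theorem one_transit_convolution (n : ℕ) (z₁ z₂ : ℝ) (h1 : 0 < z₁) (h2 : 0 < z₂) :
    ∑ p ∈ Finset.range (n + 1), Bq n p *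
        ∑ q ∈ Finset.range (p + 1), z₁⁻¹ ^ q * z₂⁻¹ ^ (p - q) =
      ∑ p ∈ Finset.range (n + 1), Zt p z₁ * Zt (n - p) z₂ :=
  one_transit_convolution_general n z₁ z₂
end

section
/- For z > 1/2, the limit of Z̃_n(z) · √π n^{3/2} / 4^n as n → ∞ equals z/(1-2z)²; i.e. the one-sided contact partition function has asymptotics Z̃_n(z) ~ (z/(1-2z)²) · 4^n/(√π n^{3/2}). -/
open Filter

/-!
Rescaled by `√π n^{3/2} / 4^n`, the ballot number `B_{n,p}` tends to `p / 2^{p+1}`. For `p = 1`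
this is the asymptotics `binomial(2n,n) ~ 4^n / √(πn)` coming from Stirling's formula; for larger
`p` it follows from the ratio `B_{n,p+1} / B_{n,p} = (p+1)(n-p) / (p(2n-p-1)) → (p+1)/(2p)`.
The same ratio is at most `(p+1)/(2p)`, so `2^p B_{n,p} ≤ 2p B_{n,1}` and the rescaled terms are
dominated by `C p (2|z|)^{-p}` uniformly in `n`. For `|z| > 1/2` this is summable, so by
Tannery's theorem the limit passes through the sum:
`∑ p z^{-p} / 2^{p+1} = z / (1 - 2z)^2`.
-/

open Topology Real

lemma Bq_nonneg (n p : ℕ) : 0 ≤ Bq n p := by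
  unfold Bq; split_ifs <;> positivity

lemma Bq_eq_zero_of_lt_s11 {n p : ℕ} (h : n < p) : Bq n p = 0 := by
  unfold Bq; split_ifs <;> first | rfl | omega

lemma Bq_zero_right_s11 {n : ℕ} (hn : n ≠ 0) : Bq n 0 = 0 := by
  simp [Bq, hn]

lemma two_mul_two_mul_sub_one_mul_Bq_one {n : ℕ} (hn : n ≠ 0) :
    2 * (2 * n - 1) * Bq n 1 = Nat.centralBinom n := by
  obtain ⟨m, rfl⟩ := Nat.exists_eq_succ_of_ne_zero hn
  have hsucc : ((m + 1 : ℕ) : ℝ) * Nat.centralBinom (m + 1) =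
      2 * (2 * m + 1) * Nat.centralBinom m := by
    exact_mod_cast Nat.succ_mul_centralBinom_succ m
  rw [Nat.centralBinom_eq_two_mul_choose m, Nat.cast_choose ℝ (by omega : m ≤ 2 * m),
    show 2 * m - m = m by omega] at hsucc
  simp only [Bq, Nat.succ_ne_zero, if_false, show 1 ≤ m + 1 by omega, if_true,
    show 2 * (m + 1) - 1 - 1 = 2 * m by omega, Nat.factorial_succ]
  have : (m.factorial : ℝ) ≠ 0 := by positivity
  have : ((m:ℝ) + 1) ≠ 0 := by positivity
  field_simp at hsucc ⊢
  push_cast at hsucc ⊢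
  linear_combination -hsucc

lemma Bq_succ_mul {n p : ℕ} (hp : p ≠ 0) (hpn : p < n) :
    p * (2 * n - p - 1) * Bq n (p + 1) = (p + 1) * (n - p) * Bq n p := by
  obtain ⟨k, rfl⟩ : ∃ k, n = p + 1 + k := ⟨n - p - 1, by omega⟩
  simp only [Bq, show p + 1 + k ≠ 0 by omega, if_false, show p + 1 ≤ p + 1 + k by omega,
    show p ≤ p + 1 + k by omega, if_true, show 2 * (p + 1 + k) - (p + 1) - 1 = p + 2 * k by omega,
    show 2 * (p + 1 + k) - p - 1 = p + 2 * k + 1 by omega, show p + 1 + k - (p + 1) = k by omega,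
    show p + 1 + k - p = k + 1 by omega, Nat.factorial_succ]
  push_cast
  field_simp
  ring

lemma two_mul_Bq_succ_le {n p : ℕ} (hp : p ≠ 0) :
    2 * p * Bq n (p + 1) ≤ (p + 1) * Bq n p := by
  rcases lt_or_ge p n with hpn | hnp
  · have hp1 : (1 : ℝ) ≤ p := by exact_mod_cast Nat.one_le_iff_ne_zero.mpr hp
    have hpn' : (p : ℝ) + 1 ≤ n := by exact_mod_cast hpn
    have hB := Bq_nonneg n p
    refine le_of_mul_le_mul_right ?_ (by linarith : (0 : ℝ) < 2 * n - p - 1)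
    calc 2 * p * Bq n (p + 1) * (2 * n - p - 1) = 2 * ((p + 1) * (n - p) * Bq n p) := by
          rw [← Bq_succ_mul hp hpn]; ring
      _ ≤ (p + 1) * Bq n p * (2 * n - p - 1) := by
          -- `2 (n - p) ≤ 2n - p - 1` because `p ≥ 1`
          nlinarith [mul_nonneg (mul_nonneg (by positivity : (0 : ℝ) ≤ p + 1) hB)
            (sub_nonneg.mpr hp1)]
  · rw [Bq_eq_zero_of_lt_s11 (by omega : n < p + 1), mul_zero]
    exact mul_nonneg (by positivity) (Bq_nonneg n p)

lemma two_pow_mul_Bq_le {n : ℕ} (hn : n ≠ 0) (p : ℕ) : 2 ^ p * Bq n p ≤ 2 * p * Bq n 1 := by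
  induction p with
  | zero => simp [Bq_zero_right_s11 hn]
  | succ p ih =>
    rcases eq_or_ne p 0 with rfl | hp
    · norm_num
    refine le_of_mul_le_mul_left ?_ (by positivity : (0 : ℝ) < p)
    calc p * (2 ^ (p + 1) * Bq n (p + 1)) = 2 ^ p * (2 * p * Bq n (p + 1)) := by ring
      _ ≤ 2 ^ p * ((p + 1) * Bq n p) :=
          mul_le_mul_of_nonneg_left (two_mul_Bq_succ_le hp) (by positivity)
      _ = (p + 1) * (2 ^ p * Bq n p) := by ring
      _ ≤ (p + 1) * (2 * p * Bq n 1) := by gcongr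
      _ = p * (2 * (p + 1 : ℕ) * Bq n 1) := by push_cast; ring

lemma centralBinom_mul_sqrt_div_four_pow_eq {m : ℕ} (hm : m ≠ 0) :
    (m.centralBinom : ℝ) * √m / 4 ^ m =
      Stirling.stirlingSeq (2 * m) / Stirling.stirlingSeq m ^ 2 := by
  have hm0 : (0 : ℝ) < m := by positivity
  have hsqrt : √(2 * ((2 * m : ℕ) : ℝ)) = 2 * √m := by
    rw [show 2 * ((2 * m : ℕ) : ℝ) = 2 ^ 2 * m by push_cast; ring, sqrt_mul (by positivity),
      sqrt_sq (by norm_num)]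
  have hpow : (((2 * m : ℕ) : ℝ) / rexp 1) ^ (2 * m) = 4 ^ m * ((m / rexp 1) ^ m) ^ 2 := by
    rw [← pow_mul, pow_mul]; push_cast; ring
  have hsq : √(2 * (m : ℝ)) ^ 2 = 2 * m := sq_sqrt (by positivity)
  have hsm : √(m : ℝ) ^ 2 = m := sq_sqrt hm0.le
  rw [Nat.centralBinom_eq_two_mul_choose, Nat.cast_choose ℝ (by omega : m ≤ 2 * m),
    show 2 * m - m = m by omega]
  simp only [Stirling.stirlingSeq, hsqrt, hpow, div_pow, mul_pow, hsq]
  field_simp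
  exact hsm

lemma tendsto_centralBinom_mul_sqrt_div_four_pow :
    Tendsto (fun m : ℕ => (m.centralBinom : ℝ) * √m / 4 ^ m) atTop (𝓝 (√π)⁻¹) := by
  have hπ : √π ≠ 0 := by positivity
  have h := (Stirling.tendsto_stirlingSeq_sqrt_pi.comp (tendsto_id.const_mul_atTop' two_pos)).div
    (Stirling.tendsto_stirlingSeq_sqrt_pi.pow 2) (pow_ne_zero 2 hπ)
  rw [sq, div_mul_cancel_left₀ hπ] at h
  refine h.congr' ?_
  filter_upwards [eventually_ne_atTop 0] with m hm
  exact (centralBinom_mul_sqrt_div_four_pow_eq hm).symm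

lemma tendsto_sub_div_two_mul_sub (a b : ℝ) :
    Tendsto (fun n : ℕ => (n - a) / (2 * n - b)) atTop (𝓝 (1 / 2)) := by
  have h := (tendsto_const_nhds (x := (1 : ℝ)).sub (tendsto_const_div_atTop_nhds_zero_nat a)).div
    (tendsto_const_nhds (x := (2 : ℝ)).sub (tendsto_const_div_atTop_nhds_zero_nat b))
    (by norm_num)
  rw [sub_zero, sub_zero] at h
  refine h.congr' ?_
  filter_upwards [eventually_ne_atTop 0] with n hn
  simp only [Pi.div_apply]
  rw [← mul_div_mul_right _ _ (Nat.cast_ne_zero.mpr hn : (n : ℝ) ≠ 0)]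
  congr 1 <;> field_simp

lemma rpow_three_halves {x : ℝ} (hx : 0 ≤ x) : x ^ ((3 : ℝ) / 2) = x * √x := by
  rw [show (3 : ℝ) / 2 = 1 + 1 / 2 by norm_num, rpow_add' hx (by norm_num), rpow_one,
    sqrt_eq_rpow]

noncomputable def contactScale (n : ℕ) : ℝ := √π * (n : ℝ) ^ ((3 : ℝ) / 2) / 4 ^ n

lemma contactScale_nonneg (n : ℕ) : 0 ≤ contactScale n := by
  unfold contactScale; positivity

lemma Bq_zero_right_mul_contactScale (n : ℕ) : Bq n 0 * contactScale n = 0 := by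
  rcases eq_or_ne n 0 with rfl | hn
  · simp [contactScale]
  · rw [Bq_zero_right_s11 hn, zero_mul]

lemma tendsto_Bq_one_mul_contactScale :
    Tendsto (fun n : ℕ => Bq n 1 * contactScale n) atTop (𝓝 (1 / 4)) := by
  have h := (tendsto_centralBinom_mul_sqrt_div_four_pow.mul_const (√π / 2)).mul
    (tendsto_sub_div_two_mul_sub 0 1)
  rw [show (√π)⁻¹ * (√π / 2) * (1 / 2) = 1 / 4 by field_simp; norm_num] at h
  refine h.congr' ?_
  filter_upwards [eventually_ne_atTop 0] with n hn
  have hn1 : (1 : ℝ) ≤ n := by exact_mod_cast Nat.one_le_iff_ne_zero.mpr hn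
  have : 2 * (n : ℝ) - 1 ≠ 0 := by linarith
  rw [contactScale, ← two_mul_two_mul_sub_one_mul_Bq_one hn,
    rpow_three_halves (Nat.cast_nonneg n)]
  field_simp
  ring

lemma tendsto_Bq_mul_contactScale (p : ℕ) :
    Tendsto (fun n : ℕ => Bq n p * contactScale n) atTop (𝓝 (p / 2 ^ (p + 1))) := by
  induction p with
  | zero => simp [Bq_zero_right_mul_contactScale]
  | succ p ih =>
    rcases eq_or_ne p 0 with rfl | hp
    · norm_num; exact tendsto_Bq_one_mul_contactScale
    have h := (ih.mul_const (((p : ℝ) + 1) / p)).mul (tendsto_sub_div_two_mul_sub p (p + 1))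
    rw [show (p : ℝ) / 2 ^ (p + 1) * ((p + 1) / p) * (1 / 2) =
        ((p + 1 : ℕ) : ℝ) / 2 ^ (p + 1 + 1) by
      field_simp; push_cast; ring] at h
    refine h.congr' ?_
    filter_upwards [eventually_gt_atTop p] with n hpn
    have hpn' : (p : ℝ) + 1 ≤ n := by exact_mod_cast hpn
    have hden : (p : ℝ) * (2 * n - p - 1) ≠ 0 :=
      mul_ne_zero (Nat.cast_ne_zero.mpr hp) (by linarith)
    rw [(eq_div_iff hden).2 ((mul_comm _ _).trans (Bq_succ_mul hp hpn))]
    field_simp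
    ring

lemma hasSum_div_two_pow_succ_mul_pow {r : ℝ} (hr : ‖r‖ < 2) :
    HasSum (fun p : ℕ => p / 2 ^ (p + 1) * r ^ p) (r / (2 - r) ^ 2) := by
  have hx : ‖r / 2‖ < 1 := by rw [norm_div, Real.norm_two]; linarith
  have h2r : 2 - r ≠ 0 := by linarith [le_abs_self r, Real.norm_eq_abs r]
  have hterm :
      (fun p : ℕ => p / 2 ^ (p + 1) * r ^ p) = fun p : ℕ => 1 / 2 * (p * (r / 2) ^ p) := by
    ext p; rw [div_pow, pow_succ]; field_simp
  have hval : r / (2 - r) ^ 2 = 1 / 2 * (r / 2 / (1 - r / 2) ^ 2) := by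
    rw [one_sub_div two_ne_zero]; field_simp
  rw [hterm, hval]
  exact (hasSum_coe_mul_geometric_of_norm_lt_one hx).mul_left _

lemma tendsto_sum_Bq_mul_pow_mul_contactScale {r : ℝ} (hr : ‖r‖ < 2) :
    Tendsto (fun n : ℕ => ∑ p ∈ Finset.range (n + 1), Bq n p * r ^ p * contactScale n) atTop
      (𝓝 (r / (2 - r) ^ 2)) := by
  obtain ⟨C, hC⟩ := tendsto_Bq_one_mul_contactScale.bddAbove_range
  have hx : ‖‖r‖ / 2‖ < 1 := by rw [norm_div, norm_norm, Real.norm_two]; linarith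
  have hsum : Summable fun p : ℕ => 2 * C * (p * (‖r‖ / 2) ^ p) :=
    (hasSum_coe_mul_geometric_of_norm_lt_one hx).summable.mul_left _
  have hbound : ∀ᶠ n in atTop, ∀ p,
      ‖Bq n p * r ^ p * contactScale n‖ ≤ 2 * C * (p * (‖r‖ / 2) ^ p) := by
    filter_upwards [eventually_ne_atTop 0] with n hn p
    rw [norm_mul, norm_mul, norm_pow, Real.norm_of_nonneg (Bq_nonneg n p),
      Real.norm_of_nonneg (contactScale_nonneg n)]
    calc Bq n p * ‖r‖ ^ p * contactScale n
        = 2 ^ p * Bq n p * contactScale n * (‖r‖ / 2) ^ p := by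
          rw [div_pow]; field_simp
      _ ≤ 2 * p * Bq n 1 * contactScale n * (‖r‖ / 2) ^ p := by
          gcongr ?_ * _ * _
          · exact contactScale_nonneg n
          · exact two_pow_mul_Bq_le hn p
      _ = 2 * p * (‖r‖ / 2) ^ p * (Bq n 1 * contactScale n) := by ring
      _ ≤ 2 * p * (‖r‖ / 2) ^ p * C := by gcongr; exact hC ⟨n, rfl⟩
      _ = 2 * C * (p * (‖r‖ / 2) ^ p) := by ring
  have hlim (p : ℕ) : Tendsto (fun n : ℕ => Bq n p * r ^ p * contactScale n) atTop
      (𝓝 (p / 2 ^ (p + 1) * r ^ p)) := by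
    simpa only [mul_right_comm] using (tendsto_Bq_mul_contactScale p).mul_const (r ^ p)
  have h := tendsto_tsum_of_dominated_convergence hsum hlim hbound
  rw [(hasSum_div_two_pow_succ_mul_pow hr).tsum_eq] at h
  refine h.congr fun n => tsum_eq_sum fun p hp => ?_
  rw [Bq_eq_zero_of_lt_s11 (by simpa using hp), zero_mul, zero_mul]

/-- For z > 1/2, Z̃ₙ(z) ~ (z/(1-2z)²) 4ⁿ/(√π n^{3/2}). -/
theorem one_sided_asymptotics_high (z : ℝ) (hz : 1 / 2 < z) :
    Tendsto (fun n : ℕ => Zt n z * (Real.sqrt Real.pi * (n : ℝ) ^ ((3 : ℝ) / 2)) / 4 ^ n)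
      atTop (nhds (z / (1 - 2 * z) ^ 2)) := by
  have hz0 : 0 < z := by linarith
  have hr : ‖z⁻¹‖ < 2 := by
    rw [norm_inv, Real.norm_of_nonneg hz0.le, inv_lt_comm₀ hz0 two_pos]; linarith
  have h := tendsto_sum_Bq_mul_pow_mul_contactScale hr
  rw [show z⁻¹ / (2 - z⁻¹) ^ 2 = z / (1 - 2 * z) ^ 2 by
    have : 2 * z - 1 ≠ 0 := by linarith
    field_simp; ring] at h
  refine h.congr fun n => ?_
  rw [Zt, mul_div_assoc, Finset.sum_mul]
  simp only [contactScale, mul_assoc]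
end
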